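/- arXiv:1006.0561 — 4 statements merged into one kernel-verified Lean document; each statement's English description precedes it below -/
import Mathlib

section
/- Suppose a ∈ ℝⁿ with aᵢ > 0, lᵢ ≤ uᵢ, and aᵀl ≤ b ≤ aᵀu (i.e. the feasible set D = {z : aᵀz = b, l ≤ z ≤ u} is nonempty). Then there exists λ* ∈ [min_i (xᵢ−uᵢ)/aᵢ, max_i (xᵢ−lᵢ)/aᵢ] such that g(λ*) = aᵀz(λ*) − b = 0. -/
/-- If aᵀl ≤ b ≤ aᵀu, there exists a root λ* of g(λ) = aᵀz(λ) − b in
[minᵢ (xᵢ−uᵢ)/aᵢ, maxᵢ (xᵢ−lᵢ)/aᵢ]. -/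
theorem dual_root_exists {n : ℕ} (a l u x : Fin (n+1) → ℝ) (b : ℝ)
    (ha : ∀ i, 0 < a i) (hlu : ∀ i, l i ≤ u i)
    (hbl : ∑ i, a i * l i ≤ b) (hbu : b ≤ ∑ i, a i * u i) :
    let z : ℝ → Fin (n+1) → ℝ := fun lam i => max (l i) (min (x i - lam * a i) (u i))
    ∃ lam : ℝ,
      Finset.univ.inf' Finset.univ_nonempty (fun i => (x i - u i) / a i) ≤ lam ∧
      lam ≤ Finset.univ.sup' Finset.univ_nonempty (fun i => (x i - l i) / a i) ∧
      (∑ i, a i * z lam i) - b = 0 := by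
  intro z
  set lo := Finset.univ.inf' Finset.univ_nonempty (fun i => (x i - u i) / a i) with hlo
  set hi := Finset.univ.sup' Finset.univ_nonempty (fun i => (x i - l i) / a i) with hhi
  have hlohi : lo ≤ hi := by
    refine le_trans (Finset.inf'_le _ (Finset.mem_univ 0)) (le_trans ?_
      (Finset.le_sup' _ (Finset.mem_univ 0)))
    exact div_le_div_of_nonneg_right (by linarith [hlu 0]) (ha 0).le
  set g : ℝ → ℝ := fun lam => (∑ i, a i * z lam i) - b with hg
  have hcont : ContinuousOn g (Set.Icc lo hi) := by
    apply Continuous.continuousOn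
    apply Continuous.sub _ continuous_const
    apply continuous_finset_sum
    intro i _
    exact continuous_const.mul ((continuous_const.max
      ((continuous_const.sub (continuous_id.mul continuous_const)).min continuous_const)))
  have hglo : g lo = (∑ i, a i * u i) - b := by
    have hz : ∀ i, z lo i = u i := by
      intro i
      have h1 : lo ≤ (x i - u i) / a i := Finset.inf'_le _ (Finset.mem_univ i)
      have h1' : lo * a i ≤ x i - u i := (le_div_iff₀ (ha i)).mp h1
      have h2 : u i ≤ x i - lo * a i := by linarith
      simp [z, min_eq_right h2, max_eq_right (hlu i)]
    simp [hg, hz]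
  have hghi : g hi = (∑ i, a i * l i) - b := by
    have hz : ∀ i, z hi i = l i := by
      intro i
      have h1 : (x i - l i) / a i ≤ hi := by
        rw [hhi]; exact Finset.le_sup' (fun j => (x j - l j) / a j) (Finset.mem_univ i)
      have h1' : x i - l i ≤ hi * a i := (div_le_iff₀ (ha i)).mp h1
      have h2 : x i - hi * a i ≤ l i := by linarith
      have h3 : min (x i - hi * a i) (u i) ≤ l i := le_trans (min_le_left _ _) h2
      simp [z, max_eq_left h3]
    simp [hg, hz]
  have hmem : (0 : ℝ) ∈ Set.Icc (g hi) (g lo) := by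
    constructor <;> [rw [hghi]; rw [hglo]] <;> linarith
  obtain ⟨lam, hlam, hglam⟩ := intermediate_value_Icc' hlohi hcont hmem
  exact ⟨lam, hlam.1, hlam.2, hglam⟩
end

section
/- Let a ∈ ℝⁿ with aᵢ > 0, l ≤ u componentwise, aᵀl ≤ b ≤ aᵀu, and x ∈ ℝⁿ. If λ* ∈ ℝ satisfies aᵀz(λ*) = b where zᵢ(λ) = max{lᵢ, min{xᵢ − λ aᵢ, uᵢ}}, then z(λ*) is the unique minimizer of ½‖z − x‖² over D = {z : aᵀz = b, l ≤ z ≤ u}, i.e. z(λ*) = P_D(x). -/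
/-- If λ* solves aᵀz(λ*) = b, then z(λ*) is the unique minimizer of
½‖z − x‖² over D = {z : aᵀz = b, l ≤ z ≤ u}, i.e. z(λ*) = P_D(x). -/
theorem clipping_gives_projection {n : ℕ} (a l u x : Fin n → ℝ) (b : ℝ)
    (ha : ∀ i, 0 < a i) (hlu : ∀ i, l i ≤ u i)
    (hbl : ∑ i, a i * l i ≤ b) (hbu : b ≤ ∑ i, a i * u i)
    (lam : ℝ)
    (hroot : ∑ i, a i * max (l i) (min (x i - lam * a i) (u i)) = b) :
    let z : Fin n → ℝ := fun i => max (l i) (min (x i - lam * a i) (u i))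
    let D : Set (Fin n → ℝ) :=
      {w | (∑ i, a i * w i) = b ∧ ∀ i, l i ≤ w i ∧ w i ≤ u i}
    z ∈ D ∧ ∀ w ∈ D,
      (1/2) * ∑ i, (z i - x i) ^ 2 ≤ (1/2) * ∑ i, (w i - x i) ^ 2 ∧
      ((1/2) * ∑ i, (w i - x i) ^ 2 = (1/2) * ∑ i, (z i - x i) ^ 2 → w = z) := by
  intro z D
  have hzD : z ∈ D := ⟨hroot, fun i => ⟨le_max_left _ _, max_le (hlu i) (min_le_right _ _)⟩⟩
  refine ⟨hzD, fun w hw => ?_⟩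
  have key : ∀ i, 0 ≤ (z i - x i + lam * a i) * (w i - z i) := by
    intro i
    rcases le_or_gt (x i - lam * a i) (l i) with h1 | h1
    · have hz : z i = l i := max_eq_left (le_trans (min_le_left _ _) h1)
      have h2 : 0 ≤ z i - x i + lam * a i := by rw [hz]; linarith
      have h3 : 0 ≤ w i - z i := by rw [hz]; linarith [(hw.2 i).1]
      positivity
    · rcases le_or_gt (x i - lam * a i) (u i) with h2 | h2
      · have hz : z i = x i - lam * a i := by
          show max (l i) (min (x i - lam * a i) (u i)) = _
          rw [min_eq_left h2]; exact max_eq_right h1.le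
        have : z i - x i + lam * a i = 0 := by rw [hz]; ring
        rw [this, zero_mul]
      · have hz : z i = u i := by
          show max (l i) (min (x i - lam * a i) (u i)) = _
          rw [min_eq_right h2.le]; exact max_eq_right (hlu i)
        have h3 : z i - x i + lam * a i ≤ 0 := by rw [hz]; linarith
        have h4 : w i - z i ≤ 0 := by rw [hz]; linarith [(hw.2 i).2]
        nlinarith
  have hsum : 0 ≤ ∑ i, (z i - x i + lam * a i) * (w i - z i) :=
    Finset.sum_nonneg fun i _ => key i
  have h0 : ∑ i, a i * (w i - z i) = 0 := by
    have : ∑ i, a i * (w i - z i) = (∑ i, a i * w i) - ∑ i, a i * z i := by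
      rw [← Finset.sum_sub_distrib]; apply Finset.sum_congr rfl; intros; ring
    rw [this, hw.1]
    have : ∑ i, a i * z i = b := hroot
    rw [this, sub_self]
  have hsplit : ∑ i, (z i - x i + lam * a i) * (w i - z i)
      = (∑ i, (z i - x i) * (w i - z i)) + lam * ∑ i, a i * (w i - z i) := by
    rw [Finset.mul_sum, ← Finset.sum_add_distrib]
    apply Finset.sum_congr rfl; intros; ring
  have hcross : 0 ≤ ∑ i, (z i - x i) * (w i - z i) := by
    rw [hsplit, h0] at hsum; linarith
  have hexp : ∑ i, (w i - x i) ^ 2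
      = (∑ i, (z i - x i) ^ 2) + 2 * (∑ i, (z i - x i) * (w i - z i))
        + ∑ i, (w i - z i) ^ 2 := by
    rw [Finset.mul_sum, ← Finset.sum_add_distrib, ← Finset.sum_add_distrib]
    apply Finset.sum_congr rfl; intros; ring
  have hsq : 0 ≤ ∑ i, (w i - z i) ^ 2 :=
    Finset.sum_nonneg fun i _ => sq_nonneg _
  constructor
  · nlinarith
  · intro heq
    have hzero : ∑ i, (w i - z i) ^ 2 = 0 := by nlinarith
    have hall := Finset.sum_eq_zero_iff_of_nonneg (fun i _ => sq_nonneg (w i - z i)) |>.mp hzero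
    funext i
    have := hall i (Finset.mem_univ i)
    have := sq_eq_zero_iff.mp this
    linarith
end

section
/- With the setup above, if λ₁ < λ₂ are two multipliers with aᵀz(λ₁) = aᵀz(λ₂) = b, then z(λ₁) = z(λ₂); i.e. the projection point z(λ*) is independent of the choice of root of g. -/
/-- The projection point is independent of the chosen root of g: if λ₁ < λ₂
both satisfy aᵀz(λ) = b then z(λ₁) = z(λ₂). -/
theorem projection_independent_of_root {n : ℕ} (a l u x : Fin n → ℝ) (b : ℝ)
    (ha : ∀ i, 0 < a i) (hlu : ∀ i, l i ≤ u i)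
    (lam₁ lam₂ : ℝ) (hlt : lam₁ < lam₂)
    (h₁ : ∑ i, a i * max (l i) (min (x i - lam₁ * a i) (u i)) = b)
    (h₂ : ∑ i, a i * max (l i) (min (x i - lam₂ * a i) (u i)) = b) :
    (fun i => max (l i) (min (x i - lam₁ * a i) (u i)))
      = fun i => max (l i) (min (x i - lam₂ * a i) (u i)) := by
  have hle : ∀ i, a i * max (l i) (min (x i - lam₂ * a i) (u i))
      ≤ a i * max (l i) (min (x i - lam₁ * a i) (u i)) := by
    intro i
    have : x i - lam₂ * a i ≤ x i - lam₁ * a i := by nlinarith [ha i]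
    exact mul_le_mul_of_nonneg_left
      (max_le_max le_rfl (min_le_min (by linarith) le_rfl)) (ha i).le
  have hsum : ∑ i, a i * max (l i) (min (x i - lam₂ * a i) (u i))
      = ∑ i, a i * max (l i) (min (x i - lam₁ * a i) (u i)) := by rw [h₁, h₂]
  have key := (Finset.sum_eq_sum_iff_of_le (fun i _ => hle i)).mp hsum
  funext i
  have := key i (Finset.mem_univ i)
  exact (mul_left_cancel₀ (ha i).ne' this).symm
end

section
/- Let D ⊆ ℝⁿ be nonempty closed convex, x ∈ D, g ∈ ℝⁿ. Then the map α ↦ ‖P_D[x − α g] − x‖ is non-decreasing on (0,∞), and the map α ↦ ‖P_D[x − α g] − x‖/α is non-increasing on (0,∞). -/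
open RealInnerProductSpace

set_option maxHeartbeats 1000000 in
/-- Along the projected gradient path, α ↦ ‖P_D[x − αg] − x‖ is non-decreasing
and α ↦ ‖P_D[x − αg] − x‖/α is non-increasing. -/
theorem projected_gradient_path_monotonicity {n : ℕ}
    (D : Set (EuclideanSpace ℝ (Fin n)))
    (hne : D.Nonempty) (hcl : IsClosed D) (hcv : Convex ℝ D)
    (x g : EuclideanSpace ℝ (Fin n)) (hx : x ∈ D)
    (α₁ α₂ : ℝ) (hα₁ : 0 < α₁) (h12 : α₁ ≤ α₂)
    (p₁ p₂ : EuclideanSpace ℝ (Fin n))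
    (hp₁ : p₁ ∈ D) (hproj₁ : ∀ z ∈ D, ‖x - α₁ • g - p₁‖ ≤ ‖x - α₁ • g - z‖)
    (hp₂ : p₂ ∈ D) (hproj₂ : ∀ z ∈ D, ‖x - α₂ • g - p₂‖ ≤ ‖x - α₂ • g - z‖) :
    ‖p₁ - x‖ ≤ ‖p₂ - x‖ ∧ ‖p₂ - x‖ / α₂ ≤ ‖p₁ - x‖ / α₁ := by
  have hα₂ : 0 < α₂ := hα₁.trans_le h12
  have key : ∀ (y p : EuclideanSpace ℝ (Fin n)), p ∈ D →
      (∀ z ∈ D, ‖y - p‖ ≤ ‖y - z‖) →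
      ∀ z ∈ D, ⟪y - p, z - p⟫ ≤ 0 := by
    intro y p hp h
    haveI : Nonempty D := hne.to_subtype
    have hbdd : BddBelow (Set.range fun w : D => ‖y - (w : EuclideanSpace ℝ (Fin n))‖) := by
      refine ⟨0, ?_⟩
      rintro b ⟨w, rfl⟩
      exact norm_nonneg _
    have h1 : ‖y - p‖ ≤ ⨅ w : D, ‖y - (w : EuclideanSpace ℝ (Fin n))‖ :=
      le_ciInf fun w => h w w.2
    have h2 : (⨅ w : D, ‖y - (w : EuclideanSpace ℝ (Fin n))‖) ≤ ‖y - p‖ :=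
      ciInf_le hbdd ⟨p, hp⟩
    have heq : ‖y - p‖ = ⨅ w : D, ‖y - (w : EuclideanSpace ℝ (Fin n))‖ := le_antisymm h1 h2
    exact (norm_eq_iInf_iff_real_inner_le_zero hcv hp).mp heq
  set u : EuclideanSpace ℝ (Fin n) := p₁ - x with hu
  set v : EuclideanSpace ℝ (Fin n) := p₂ - x with hv
  have r1 : x - α₁ • g - p₁ = -(α₁ • g) - u := by rw [hu]; abel
  have r2 : x - α₂ • g - p₂ = -(α₂ • g) - v := by rw [hv]; abel
  have r3 : p₂ - p₁ = v - u := by rw [hu, hv]; abel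
  have r4 : p₁ - p₂ = u - v := by rw [hu, hv]; abel
  have h1 := key _ _ hp₁ hproj₁ p₂ hp₂
  have h2 := key _ _ hp₂ hproj₂ p₁ hp₁
  rw [r1, r3] at h1
  rw [r2, r4] at h2
  have e1 : ⟪-(α₁ • g) - u, v - u⟫
      = α₁ * ⟪g, u⟫ - α₁ * ⟪g, v⟫ - ⟪u, v⟫ + ‖u‖ ^ 2 := by
    simp only [inner_sub_left, inner_sub_right, inner_neg_left, real_inner_smul_left,
      real_inner_self_eq_norm_sq]
    ring_nf
  have e2 : ⟪-(α₂ • g) - v, u - v⟫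
      = α₂ * ⟪g, v⟫ - α₂ * ⟪g, u⟫ - ⟪u, v⟫ + ‖v‖ ^ 2 := by
    simp only [inner_sub_left, inner_sub_right, inner_neg_left, real_inner_smul_left,
      real_inner_self_eq_norm_sq]
    rw [real_inner_comm v u]
    ring_nf
  rw [e1] at h1
  rw [e2] at h2
  have cs : ⟪u, v⟫ ≤ ‖u‖ * ‖v‖ := real_inner_le_norm u v
  have hs : (0:ℝ) ≤ ‖u‖ := norm_nonneg _
  have ht : (0:ℝ) ≤ ‖v‖ := norm_nonneg _
  -- key combined inequality
  have k1 : α₂ * (α₁ * ⟪g, u⟫ - α₁ * ⟪g, v⟫ - ⟪u, v⟫ + ‖u‖ ^ 2) ≤ 0 := by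
    have := mul_le_mul_of_nonneg_left h1 hα₂.le; simpa using this
  have k2 : α₁ * (α₂ * ⟪g, v⟫ - α₂ * ⟪g, u⟫ - ⟪u, v⟫ + ‖v‖ ^ 2) ≤ 0 := by
    have := mul_le_mul_of_nonneg_left h2 hα₁.le; simpa using this
  have keyq : α₁ * ‖v‖ ^ 2 + α₂ * ‖u‖ ^ 2 - (α₁ + α₂) * ⟪u, v⟫ ≤ 0 := by linarith
  have key2 : α₁ * ‖v‖ ^ 2 + α₂ * ‖u‖ ^ 2 - (α₁ + α₂) * (‖u‖ * ‖v‖) ≤ 0 := by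
    nlinarith [keyq, cs, hα₁, hα₂]
  have goal1 : ‖u‖ ≤ ‖v‖ := by
    by_contra hc
    push_neg at hc
    nlinarith [key2, mul_nonneg (mul_nonneg (sub_nonneg.2 h12) hs) (sub_pos.2 hc).le,
      mul_pos hα₁ (pow_pos (sub_pos.2 hc) 2)]
  refine ⟨goal1, ?_⟩
  rw [div_le_div_iff₀ hα₂ hα₁]
  nlinarith [key2, mul_nonneg (sub_nonneg.2 goal1) hs, mul_nonneg (sub_nonneg.2 goal1) ht,
    mul_nonneg (sub_nonneg.2 h12) hs, hs, ht, hα₁, hα₂,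
    mul_nonneg (mul_nonneg (sub_nonneg.2 goal1) hα₁.le) ht]
end
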